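/- Let q ∈ ℂ* with |q| ≠ 1 and let a ∈ ℂ(z)*. Then the elliptic divisor div_E(a) is zero if and only if there exist an integer r, a complex number μ ∈ ℂ* and h ∈ ℂ(z)* such that a = μ·z^r·σ_q(h)/h. -/

import Mathlib

/-!
Setting: fix `q ∈ ℂ*` with `|q| ≠ 1`.  We work with meromorphic functions on the
punctured plane `ℂ* = {z ≠ 0}`, represented as plain functions `ℂ → ℂ` together
with a `MeromorphicOn` hypothesis; all identities between meromorphic functions
are understood to hold off a countable (discrete) exceptional set (`MZeroOn`).

* `CE q` is the field `C_E` of `σ_q`-invariant meromorphic functions on `ℂ*`;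
* `KE q` is the field `K_E = C_E(z)`;
* `AlgIndepOver U K g` says that the family `g` of meromorphic functions on `U`
  is algebraically independent over the coefficient field `K`: every polynomial
  with coefficients in `K` that vanishes (as meromorphic function on `U`) at the
  family has all its coefficients zero as meromorphic functions;
* `delq` is the derivation `∂ = z·d/dz` on functions, `dRat` the corresponding
  derivation on rational functions;
* `sigmaq q` is the substitution `z ↦ qz` on rational functions `RatFunc ℂ`;
* `QDE q a f` is the q-difference equation `f(qz) = a(z)·f(z)` as an identity of
  meromorphic functions on `ℂ*` (written without denominators);
* `ordAt a c` is the order of vanishing of the rational function `a` at `c`, and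
  `divE q hq a` is the elliptic divisor of `a`, an element of the free abelian
  group on `ℂ*/q^ℤ` (realised as a finitely supported `ℤ`-valued function on the
  quotient group `ℂˣ ⧸ zpowers q`).
-/

open scoped Classical

noncomputable section

/-- The punctured complex plane ℂ*. -/
def Cstar : Set ℂ := {z : ℂ | z ≠ 0}

/-- `f` represents the zero meromorphic function on `U`:
it vanishes off a countable exceptional set. -/
def MZeroOn (U : Set ℂ) (f : ℂ → ℂ) : Prop :=
  ∃ S : Set ℂ, S.Countable ∧ ∀ z ∈ U \ S, f z = 0

/-- `f` is a nonzero meromorphic function on `U`. -/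
def MerNonzero (U : Set ℂ) (f : ℂ → ℂ) : Prop :=
  MeromorphicOn f U ∧ ¬ MZeroOn U f

/-- The derivation ∂ = z·d/dz. -/
def delq (f : ℂ → ℂ) : ℂ → ℂ := fun z => z * deriv f z

/-- The field C_E of σ_q-invariant meromorphic functions on ℂ*. -/
def CE (q : ℂ) : Set (ℂ → ℂ) :=
  {c | MeromorphicOn c Cstar ∧ ∀ z : ℂ, c (q * z) = c z}

/-- Evaluation of a polynomial with function coefficients at the coordinate z. -/
def evalz (P : Polynomial (ℂ → ℂ)) : ℂ → ℂ :=
  Polynomial.eval (fun z : ℂ => z) P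

/-- The field K_E = C_E(z): quotients of polynomials in z with coefficients in C_E. -/
def KE (q : ℂ) : Set (ℂ → ℂ) :=
  {f | ∃ Np Dp : Polynomial (ℂ → ℂ),
        (∀ i, Np.coeff i ∈ CE q) ∧ (∀ i, Dp.coeff i ∈ CE q) ∧
        ¬ MZeroOn Cstar (evalz Dp) ∧
        MZeroOn Cstar (fun z => f z * evalz Dp z - evalz Np z)}

/-- The family `g` of meromorphic functions on `U` is algebraically independent
over the set `K` of coefficient functions. -/
def AlgIndepOver (U : Set ℂ) (K : Set (ℂ → ℂ)) {ι : Type} (g : ι → ℂ → ℂ) : Prop :=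
  ∀ P : MvPolynomial ι (ℂ → ℂ),
    (∀ m, MvPolynomial.coeff m P ∈ K) →
    MZeroOn U (MvPolynomial.eval g P) →
    ∀ m, MZeroOn U (MvPolynomial.coeff m P)

/-- σ_q acting on rational functions: (σ_q a)(z) = a(qz). -/
def sigmaq (q : ℂ) (a : RatFunc ℂ) : RatFunc ℂ :=
  algebraMap (Polynomial ℂ) (RatFunc ℂ) (a.num.comp (Polynomial.C q * Polynomial.X)) /
    algebraMap (Polynomial ℂ) (RatFunc ℂ) (a.denom.comp (Polynomial.C q * Polynomial.X))

/-- The q-difference equation f(qz) = a(z)·f(z), as an identity of meromorphic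
functions on ℂ* (denominators cleared). -/
def QDE (q : ℂ) (a : RatFunc ℂ) (f : ℂ → ℂ) : Prop :=
  MZeroOn Cstar (fun z => f (q * z) * Polynomial.eval z a.denom - Polynomial.eval z a.num * f z)

/-- Order of vanishing of a rational function at a point. -/
def ordAt (a : RatFunc ℂ) (c : ℂ) : ℤ :=
  (Polynomial.rootMultiplicity c a.num : ℤ) - (Polynomial.rootMultiplicity c a.denom : ℤ)

/-- The elliptic divisor of a rational function: the image in Div(ℂ*/q^ℤ) of the
part of its divisor prime to 0, as a (finitely supported) ℤ-valued function on
the quotient group ℂˣ/q^ℤ. -/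
def divE (q : ℂ) (hq : q ≠ 0) (a : RatFunc ℂ) :
    (ℂˣ ⧸ Subgroup.zpowers (Units.mk0 q hq)) → ℤ := fun c =>
  ∑ᶠ α : ℂˣ,
    if (QuotientGroup.mk α : ℂˣ ⧸ Subgroup.zpowers (Units.mk0 q hq)) = c then
      ordAt a (α : ℂ) else 0

/-- An element of ℂ(z)* is standard if no two points of its divisor away from 0
are congruent modulo q^ℤ: if c ∈ ℂ* is a zero or pole of a and m ≠ 0, then q^m·c
is not a zero or pole of a. -/
def StandardQ (q : ℂ) (a : RatFunc ℂ) : Prop :=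
  ∀ c : ℂ, c ≠ 0 → ordAt a c ≠ 0 → ∀ m : ℤ, m ≠ 0 → ordAt a (q ^ m * c) = 0

/-- The derivation ∂ = z·d/dz on rational functions. -/
def dRat (a : RatFunc ℂ) : RatFunc ℂ :=
  RatFunc.X *
    ((algebraMap (Polynomial ℂ) (RatFunc ℂ) (Polynomial.derivative a.num) *
        algebraMap (Polynomial ℂ) (RatFunc ℂ) a.denom -
      algebraMap (Polynomial ℂ) (RatFunc ℂ) a.num *
        algebraMap (Polynomial ℂ) (RatFunc ℂ) (Polynomial.derivative a.denom)) /
      algebraMap (Polynomial ℂ) (RatFunc ℂ) a.denom ^ 2)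

/-!
The backward direction holds because `divE` is additive, vanishes on `μ z^r`, and is invariant
under `σ_q`. Conversely, `(z - qα)/(z - α) = q · σ_q(h)/h` for `h = 1/(z - qα)`, so for `β ∈ α q^ℤ`
the ratio `(z - β)/(z - α)` is gauge equivalent to a constant. Multiplying `a` by powers of such
ratios moves every zero and pole of `a` in `ℂ*` to a fixed representative of its class in
`ℂ*/q^ℤ`, where the orders add up to the corresponding coefficient of `divE a`, that is, to zero.
What is left has no zeros or poles in `ℂ*`, hence is a monomial `μ z^r`.
-/

open Polynomial

local notation "ι" => algebraMap ℂ[X] (RatFunc ℂ)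

variable {q : ℂ}

lemma eq_C_leadingCoeff_mul_X_pow_of_forall_isRoot {K : Type*} [Field K] [IsAlgClosed K]
    {p : K[X]} (h : ∀ c, p.IsRoot c → c = 0) :
    p = C p.leadingCoeff * X ^ p.roots.card := by
  have hroots : p.roots = Multiset.replicate p.roots.card 0 :=
    Multiset.eq_replicate_of_mem fun c hc => h c (isRoot_of_mem_roots hc)
  conv_lhs => rw [(IsAlgClosed.splits p).eq_prod_roots, hroots]
  simp

lemma ordAt_algebraMap_div {p r : ℂ[X]} (hp : p ≠ 0) (hr : r ≠ 0) (c : ℂ) :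
    ordAt (ι p / ι r) c = (rootMultiplicity c p : ℤ) - rootMultiplicity c r := by
  set a := ι p / ι r
  have ha : a ≠ 0 := div_ne_zero (RatFunc.algebraMap_ne_zero hp) (RatFunc.algebraMap_ne_zero hr)
  have hrel := congrArg (rootMultiplicity c)
    ((RatFunc.num_mul_eq_mul_denom_iff (x := a) (p := p) hr).mpr rfl)
  rw [rootMultiplicity_mul (mul_ne_zero (RatFunc.num_ne_zero ha) hr),
    rootMultiplicity_mul (mul_ne_zero hp (RatFunc.denom_ne_zero a))] at hrel
  unfold ordAt
  omega

lemma ordAt_mul {a b : RatFunc ℂ} (ha : a ≠ 0) (hb : b ≠ 0) (c : ℂ) :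
    ordAt (a * b) c = ordAt a c + ordAt b c := by
  have hnum := mul_ne_zero (RatFunc.num_ne_zero ha) (RatFunc.num_ne_zero hb)
  have hden := mul_ne_zero (RatFunc.denom_ne_zero a) (RatFunc.denom_ne_zero b)
  have hab : a * b = ι (a.num * b.num) / ι (a.denom * b.denom) := by
    rw [map_mul, map_mul, ← div_mul_div_comm, RatFunc.num_div_denom, RatFunc.num_div_denom]
  rw [hab, ordAt_algebraMap_div hnum hden, rootMultiplicity_mul hnum, rootMultiplicity_mul hden]
  unfold ordAt
  push_cast
  ring

lemma ordAt_one (c : ℂ) : ordAt 1 c = 0 := by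
  simp [ordAt]

lemma ordAt_inv {a : RatFunc ℂ} (ha : a ≠ 0) (c : ℂ) : ordAt a⁻¹ c = -ordAt a c := by
  have h := ordAt_mul ha (inv_ne_zero ha) c
  rw [mul_inv_cancel₀ ha, ordAt_one] at h
  omega

lemma ordAt_zpow {a : RatFunc ℂ} (ha : a ≠ 0) (n : ℤ) (c : ℂ) :
    ordAt (a ^ n) c = n * ordAt a c := by
  induction n using Int.induction_on with
  | zero => simp [ordAt_one]
  | succ k ih => rw [zpow_add_one₀ ha, ordAt_mul (zpow_ne_zero _ ha) ha, ih]; ring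
  | pred k ih =>
    rw [zpow_sub_one₀ ha, ordAt_mul (zpow_ne_zero _ ha) (inv_ne_zero ha), ordAt_inv ha, ih]; ring

lemma ordAt_prod {ι' : Type*} (s : Finset ι') {f : ι' → RatFunc ℂ} (hf : ∀ i ∈ s, f i ≠ 0)
    (c : ℂ) : ordAt (∏ i ∈ s, f i) c = ∑ i ∈ s, ordAt (f i) c := by
  induction s using Finset.induction_on with
  | empty => simp [ordAt_one]
  | insert i s hi ih =>
    rw [Finset.prod_insert hi, Finset.sum_insert hi,
      ordAt_mul (hf i (s.mem_insert_self i)) (Finset.prod_ne_zero_iff.mpr fun j hj =>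
        hf j (Finset.mem_insert_of_mem hj)),
      ih fun j hj => hf j (Finset.mem_insert_of_mem hj)]

lemma ordAt_algebraMap {p : ℂ[X]} (hp : p ≠ 0) (c : ℂ) : ordAt (ι p) c = rootMultiplicity c p := by
  have h1 : rootMultiplicity c (1 : ℂ[X]) = 0 := by simp
  simpa [h1] using ordAt_algebraMap_div hp one_ne_zero c

lemma ordAt_C (μ : ℂ) (c : ℂ) : ordAt (RatFunc.C μ) c = 0 := by
  rcases eq_or_ne μ 0 with rfl | hμ
  · simp [ordAt]
  · rw [← RatFunc.algebraMap_C, ordAt_algebraMap (C_ne_zero.mpr hμ), rootMultiplicity_C]; rfl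

lemma ordAt_X {c : ℂ} (hc : c ≠ 0) : ordAt RatFunc.X c = 0 := by
  rw [← RatFunc.algebraMap_X, ordAt_algebraMap X_ne_zero,
    rootMultiplicity_eq_zero (by simpa using hc)]; rfl

lemma algebraMap_X_sub_C_ne_zero (γ : ℂ) : ι (X - C γ) ≠ 0 :=
  RatFunc.algebraMap_ne_zero (X_sub_C_ne_zero γ)

lemma ordAt_linear_div_linear (α β c : ℂ) :
    ordAt (ι (X - C β) / ι (X - C α)) c = (if c = β then 1 else 0) - (if c = α then 1 else 0) := by
  rw [ordAt_algebraMap_div (X_sub_C_ne_zero β) (X_sub_C_ne_zero α), rootMultiplicity_X_sub_C,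
    rootMultiplicity_X_sub_C]
  split_ifs <;> rfl

lemma C_mul_X_zpow_ne_zero {μ : ℂ} (hμ : μ ≠ 0) (r : ℤ) : RatFunc.C μ * RatFunc.X ^ r ≠ 0 :=
  mul_ne_zero (by simpa using hμ) (zpow_ne_zero r RatFunc.X_ne_zero)

lemma ordAt_C_mul_X_zpow (μ : ℂ) (r : ℤ) {c : ℂ} (hc : c ≠ 0) :
    ordAt (RatFunc.C μ * RatFunc.X ^ r) c = 0 := by
  rcases eq_or_ne μ 0 with rfl | hμ
  · simp [ordAt]
  · rw [ordAt_mul (by simpa using hμ) (zpow_ne_zero r RatFunc.X_ne_zero), ordAt_C,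
      ordAt_zpow RatFunc.X_ne_zero, ordAt_X hc]; ring

lemma ordAt_support_finite {a : RatFunc ℂ} (ha : a ≠ 0) :
    {α : ℂˣ | ordAt a α ≠ 0}.Finite := by
  have hnd : a.num * a.denom ≠ 0 := mul_ne_zero (RatFunc.num_ne_zero ha) (RatFunc.denom_ne_zero a)
  refine ((a.num * a.denom).roots.toFinset.finite_toSet.preimage
    Units.val_injective.injOn).subset fun α hα => ?_
  have hroot : 0 < rootMultiplicity (α : ℂ) (a.num * a.denom) := by
    replace hα : ordAt a α ≠ 0 := hα
    unfold ordAt at hα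
    rw [rootMultiplicity_mul hnd]
    omega
  rw [rootMultiplicity_pos hnd] at hroot
  simpa [mem_roots hnd] using hroot

lemma ordAt_mul_prod_linear_div_linear_zpow {a : RatFunc ℂ} (ha : a ≠ 0) {S : Finset ℂˣ}
    (hS : ∀ α : ℂˣ, ordAt a α ≠ 0 → α ∈ S) (f : ℂˣ → ℂˣ) (γ : ℂˣ) :
    ordAt (a * ∏ α ∈ S, (ι (X - C (f α : ℂ)) / ι (X - C (α : ℂ))) ^ ordAt a α) γ =
      ∑ α ∈ S, if f α = γ then ordAt a α else 0 := by
  have hratio (α : ℂˣ) : ι (X - C (f α : ℂ)) / ι (X - C (α : ℂ)) ≠ 0 :=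
    div_ne_zero (algebraMap_X_sub_C_ne_zero _) (algebraMap_X_sub_C_ne_zero _)
  have hfac : ∀ α ∈ S, (ι (X - C (f α : ℂ)) / ι (X - C (α : ℂ))) ^ ordAt a α ≠ 0 :=
    fun α _ => zpow_ne_zero _ (hratio α)
  rw [ordAt_mul ha (Finset.prod_ne_zero_iff.mpr hfac), ordAt_prod S hfac]
  simp only [ordAt_zpow (hratio _), ordAt_linear_div_linear, Units.val_inj, mul_sub, mul_ite,
    mul_one, mul_zero, Finset.sum_sub_distrib, Finset.sum_ite_eq]
  have hγ : (if γ ∈ S then ordAt a γ else 0) = ordAt a γ := by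
    by_cases h : ordAt a γ = 0 <;> simp [h, hS γ]
  simp only [hγ, eq_comm (a := γ), add_sub_cancel]

lemma exists_eq_C_mul_X_zpow_of_ordAt_eq_zero {a : RatFunc ℂ} (ha : a ≠ 0)
    (h : ∀ c ≠ 0, ordAt a c = 0) : ∃ r : ℤ, ∃ μ : ℂ, μ ≠ 0 ∧ a = RatFunc.C μ * RatFunc.X ^ r := by
  have hnum := RatFunc.num_ne_zero ha
  have hden := RatFunc.denom_ne_zero a
  have hroots (c : ℂ) (hc : c ≠ 0) : ¬ a.num.IsRoot c ∧ ¬ a.denom.IsRoot c := by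
    have hcommon : ¬ (a.num.IsRoot c ∧ a.denom.IsRoot c) := fun ⟨h1, h2⟩ =>
      not_isUnit_X_sub_C c ((RatFunc.isCoprime_num_denom a).isUnit_of_dvd'
        (dvd_iff_isRoot.mpr h1) (dvd_iff_isRoot.mpr h2))
    have hord := h c hc
    unfold ordAt at hord
    rw [← rootMultiplicity_pos hnum, ← rootMultiplicity_pos hden] at hcommon ⊢
    omega
  have hnum_eq := eq_C_leadingCoeff_mul_X_pow_of_forall_isRoot fun c hc => by
    by_contra h0; exact (hroots c h0).1 hc
  have hden_eq := eq_C_leadingCoeff_mul_X_pow_of_forall_isRoot fun c hc => by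
    by_contra h0; exact (hroots c h0).2 hc
  refine ⟨a.num.roots.card - a.denom.roots.card, a.num.leadingCoeff / a.denom.leadingCoeff,
    div_ne_zero (leadingCoeff_ne_zero.mpr hnum) (leadingCoeff_ne_zero.mpr hden), ?_⟩
  conv_lhs => rw [← RatFunc.num_div_denom a, hnum_eq, hden_eq]
  rw [zpow_sub₀ RatFunc.X_ne_zero]
  simp only [map_mul, map_pow, RatFunc.algebraMap_C, RatFunc.algebraMap_X, map_div₀, zpow_natCast]
  ring

lemma comp_C_mul_X_injective (hq : q ≠ 0) : Function.Injective (compRingHom (C q * X)) := by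
  refine Function.LeftInverse.injective (g := fun p => p.comp (C q⁻¹ * X)) fun p => ?_
  simp only [coe_compRingHom_apply, comp_assoc, mul_comp, C_comp, X_comp, ← mul_assoc, ← C_mul,
    mul_inv_cancel₀ hq, C_1, one_mul, comp_X]

def sigmaqHom (hq : q ≠ 0) : RatFunc ℂ →+* RatFunc ℂ :=
  RatFunc.mapRingHom (compRingHom (C q * X))
    (nonZeroDivisors_le_comap_nonZeroDivisors_of_injective _ (comp_C_mul_X_injective hq))

lemma sigmaq_eq_sigmaqHom (hq : q ≠ 0) (a : RatFunc ℂ) : sigmaq q a = sigmaqHom hq a := by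
  conv_rhs => rw [← RatFunc.num_div_denom a]
  rw [sigmaqHom, RatFunc.coe_mapRingHom_eq_coe_map, RatFunc.map_apply_div]
  rfl

lemma sigmaqHom_algebraMap (hq : q ≠ 0) (p : ℂ[X]) : sigmaqHom hq (ι p) = ι (p.comp (C q * X)) := by
  rw [sigmaqHom, RatFunc.coe_mapRingHom_eq_coe_map, ← div_one (ι p), ← map_one ι,
    RatFunc.map_apply_div]
  simp

lemma sigmaq_ne_zero (hq : q ≠ 0) {h : RatFunc ℂ} (hh : h ≠ 0) : sigmaq q h ≠ 0 := by
  rw [sigmaq_eq_sigmaqHom hq]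
  exact (_root_.map_ne_zero _).mpr hh

lemma ordAt_sigmaq (hq : q ≠ 0) {h : RatFunc ℂ} (hh : h ≠ 0) (c : ℂ) :
    ordAt (sigmaq q h) c = ordAt h (q * c) := by
  have hcomp {p : ℂ[X]} (hp : p ≠ 0) : p.comp (C q * X) ≠ 0 :=
    (map_ne_zero_iff _ (comp_C_mul_X_injective hq)).mpr hp
  have hroot (p : ℂ[X]) : rootMultiplicity c (p.comp (C q * X)) = rootMultiplicity (q * c) p := by
    simpa using rootMultiplicity_comp_C_mul_X_add_C p q 0 c (IsUnit.mk0 q hq)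
  rw [sigmaq, ordAt_algebraMap_div (hcomp (RatFunc.num_ne_zero hh))
    (hcomp (RatFunc.denom_ne_zero h)), hroot, hroot]
  rfl

def GaugeEquivMonomial (q : ℂ) (a : RatFunc ℂ) : Prop :=
  ∃ r : ℤ, ∃ μ : ℂ, μ ≠ 0 ∧ ∃ h : RatFunc ℂ, h ≠ 0 ∧
    a = RatFunc.C μ * RatFunc.X ^ r * sigmaq q h / h

namespace GaugeEquivMonomial

lemma monomial {μ : ℂ} (hμ : μ ≠ 0) (r : ℤ) : GaugeEquivMonomial q (RatFunc.C μ * RatFunc.X ^ r) :=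
  ⟨r, μ, hμ, 1, one_ne_zero, by simp [sigmaq]⟩

lemma ne_zero (hq : q ≠ 0) {a : RatFunc ℂ} (ha : GaugeEquivMonomial q a) : a ≠ 0 := by
  obtain ⟨r, μ, hμ, h, hh, rfl⟩ := ha
  exact div_ne_zero (mul_ne_zero (C_mul_X_zpow_ne_zero hμ r) (sigmaq_ne_zero hq hh)) hh

lemma mul (hq : q ≠ 0) {a b : RatFunc ℂ} (ha : GaugeEquivMonomial q a)
    (hb : GaugeEquivMonomial q b) : GaugeEquivMonomial q (a * b) := by
  obtain ⟨r, μ, hμ, h, hh, rfl⟩ := ha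
  obtain ⟨s, ν, hν, k, hk, rfl⟩ := hb
  refine ⟨r + s, μ * ν, mul_ne_zero hμ hν, h * k, mul_ne_zero hh hk, ?_⟩
  simp only [sigmaq_eq_sigmaqHom hq, map_mul, zpow_add₀ (RatFunc.X_ne_zero (K := ℂ))]
  field_simp

lemma inv (hq : q ≠ 0) {a : RatFunc ℂ} (ha : GaugeEquivMonomial q a) :
    GaugeEquivMonomial q a⁻¹ := by
  obtain ⟨r, μ, hμ, h, hh, rfl⟩ := ha
  refine ⟨-r, μ⁻¹, inv_ne_zero hμ, h⁻¹, inv_ne_zero hh, ?_⟩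
  simp only [sigmaq_eq_sigmaqHom hq, map_inv₀, zpow_neg]
  field_simp

lemma zpow (hq : q ≠ 0) {a : RatFunc ℂ} (ha : GaugeEquivMonomial q a) (n : ℤ) :
    GaugeEquivMonomial q (a ^ n) := by
  induction n using Int.induction_on with
  | zero => simpa using monomial (q := q) one_ne_zero 0
  | succ k ih => rw [zpow_add_one₀ (ha.ne_zero hq)]; exact ih.mul hq ha
  | pred k ih => rw [zpow_sub_one₀ (ha.ne_zero hq)]; exact ih.mul hq (ha.inv hq)

lemma prod (hq : q ≠ 0) {ι' : Type*} (s : Finset ι') {f : ι' → RatFunc ℂ}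
    (hf : ∀ i ∈ s, GaugeEquivMonomial q (f i)) : GaugeEquivMonomial q (∏ i ∈ s, f i) :=
  Finset.prod_induction f _ (fun _ _ ha hb => ha.mul hq hb)
    (by simpa using monomial one_ne_zero 0) hf

lemma linear_div_linear_of_q_mul (hq : q ≠ 0) (α : ℂ) :
    GaugeEquivMonomial q (ι (X - C (q * α)) / ι (X - C α)) := by
  refine ⟨0, q, hq, (ι (X - C (q * α)))⁻¹, inv_ne_zero (algebraMap_X_sub_C_ne_zero _), ?_⟩
  have hcomp : (X - C (q * α)).comp (C q * X) = C q * (X - C α) := by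
    rw [sub_comp, X_comp, C_comp, C_mul]; ring
  rw [sigmaq_eq_sigmaqHom hq, map_inv₀, sigmaqHom_algebraMap, hcomp, map_mul ι,
    RatFunc.algebraMap_C]
  have := algebraMap_X_sub_C_ne_zero α
  have := algebraMap_X_sub_C_ne_zero (q * α)
  have : RatFunc.C q ≠ 0 := by simpa using hq
  field_simp

lemma linear_div_linear_of_zpow_mul (hq : q ≠ 0) (m : ℤ) (α : ℂ) :
    GaugeEquivMonomial q (ι (X - C (q ^ m * α)) / ι (X - C α)) := by
  induction m using Int.induction_on generalizing α with
  | zero =>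
    rw [zpow_zero, one_mul, div_self (algebraMap_X_sub_C_ne_zero α)]
    simpa using monomial (q := q) one_ne_zero 0
  | succ k ih =>
    have hpow : q ^ ((k : ℤ) + 1) * α = q ^ (k : ℤ) * (q * α) := by rw [zpow_add_one₀ hq]; ring
    rw [← div_mul_div_cancel₀ (algebraMap_X_sub_C_ne_zero (q * α)), hpow]
    exact (ih _).mul hq (linear_div_linear_of_q_mul hq α)
  | pred k ih =>
    have hstep := (linear_div_linear_of_q_mul hq (q⁻¹ * α)).inv hq
    rw [inv_div, mul_inv_cancel_left₀ hq] at hstep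
    have hpow : q ^ (-(k : ℤ) - 1) * α = q ^ (-(k : ℤ)) * (q⁻¹ * α) := by
      rw [zpow_sub_one₀ hq]; ring
    rw [← div_mul_div_cancel₀ (algebraMap_X_sub_C_ne_zero (q⁻¹ * α)), hpow]
    exact (ih _).mul hq hstep

lemma linear_div_linear_of_mk_eq (hq : q ≠ 0) {α β : ℂˣ}
    (h : (α : ℂˣ ⧸ Subgroup.zpowers (Units.mk0 q hq)) = β) :
    GaugeEquivMonomial q (ι (X - C (β : ℂ)) / ι (X - C (α : ℂ))) := by
  obtain ⟨m, hm⟩ := Subgroup.mem_zpowers_iff.mp (QuotientGroup.eq.mp h)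
  have hβ : (β : ℂ) = q ^ m * α := by
    rw [inv_mul_eq_iff_eq_mul.mp hm.symm, Units.val_mul, Units.val_zpow_eq_zpow_val, Units.val_mk0,
      mul_comm]
  rw [hβ]
  exact linear_div_linear_of_zpow_mul hq m α

end GaugeEquivMonomial

section DivE

variable (hq : q ≠ 0)

local notation "mkQ" => (QuotientGroup.mk : ℂˣ → ℂˣ ⧸ Subgroup.zpowers (Units.mk0 q hq))

lemma divE_eq_sum (a : RatFunc ℂ) {S : Finset ℂˣ} (hS : ∀ α : ℂˣ, ordAt a α ≠ 0 → α ∈ S)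
    (c : ℂˣ ⧸ Subgroup.zpowers (Units.mk0 q hq)) :
    divE q hq a c = ∑ α ∈ S, if mkQ α = c then ordAt a α else 0 :=
  finsum_eq_sum_of_support_subset _ fun α hα => hS α fun h0 => hα (by simp [h0])

lemma divE_mul {a b : RatFunc ℂ} (ha : a ≠ 0) (hb : b ≠ 0) :
    divE q hq (a * b) = divE q hq a + divE q hq b := by
  funext c
  set S := (ordAt_support_finite ha).toFinset ∪ (ordAt_support_finite hb).toFinset
  have hSa : ∀ α : ℂˣ, ordAt a α ≠ 0 → α ∈ S := fun α hα => by simp [S, hα]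
  have hSb : ∀ α : ℂˣ, ordAt b α ≠ 0 → α ∈ S := fun α hα => by simp [S, hα]
  have hSab : ∀ α : ℂˣ, ordAt (a * b) α ≠ 0 → α ∈ S := fun α hα => by
    rw [ordAt_mul ha hb] at hα
    by_cases h : ordAt a α = 0
    · exact hSb α (by omega)
    · exact hSa α h
  rw [Pi.add_apply, divE_eq_sum hq _ hSab, divE_eq_sum hq _ hSa, divE_eq_sum hq _ hSb,
    ← Finset.sum_add_distrib]
  refine Finset.sum_congr rfl fun α _ => ?_
  split_ifs <;> simp [ordAt_mul ha hb]

lemma divE_eq_zero_of_ordAt_eq_zero {a : RatFunc ℂ} (h : ∀ α : ℂˣ, ordAt a α = 0) :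
    divE q hq a = 0 := by
  funext c
  simp [divE, h]

lemma divE_sigmaq {h : RatFunc ℂ} (hh : h ≠ 0) : divE q hq (sigmaq q h) = divE q hq h := by
  funext c
  rw [divE, divE]
  conv_rhs => rw [← finsum_comp_equiv (Equiv.mulLeft (Units.mk0 q hq))]
  refine finsum_congr fun α => ?_
  have hmk : mkQ (Units.mk0 q hq * α) = mkQ α := by
    rw [mul_comm]; exact QuotientGroup.mk_mul_of_mem α (Subgroup.mem_zpowers _)
  simp [hmk, ordAt_sigmaq hq hh]

end DivE

lemma divE_eq_zero_of_gaugeEquivMonomial (hq : q ≠ 0) {a : RatFunc ℂ}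
    (ha : GaugeEquivMonomial q a) : divE q hq a = 0 := by
  obtain ⟨r, μ, hμ, h, hh, rfl⟩ := ha
  have hm := C_mul_X_zpow_ne_zero hμ r
  have hσ := sigmaq_ne_zero hq hh
  have key := divE_mul hq (div_ne_zero (mul_ne_zero hm hσ) hh) hh
  rw [div_mul_cancel₀ _ hh, divE_mul hq hm hσ, divE_sigmaq hq hh,
    divE_eq_zero_of_ordAt_eq_zero hq fun α => ordAt_C_mul_X_zpow μ r α.ne_zero, zero_add] at key
  exact add_eq_right.mp key.symm

lemma QuotientGroup.out_mk_eq_iff {G : Type*} [Group G] (H : Subgroup G) (α γ : G) :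
    (QuotientGroup.mk α : G ⧸ H).out = γ ↔
      (QuotientGroup.mk α : G ⧸ H) = QuotientGroup.mk γ ∧ (QuotientGroup.mk γ : G ⧸ H).out = γ := by
  constructor
  · rintro rfl
    simp only [QuotientGroup.out_eq', and_self]
  · rintro ⟨h, hγ⟩
    rw [h, hγ]

lemma gaugeEquivMonomial_of_divE_eq_zero (hq : q ≠ 0) {a : RatFunc ℂ} (ha : a ≠ 0)
    (hdiv : divE q hq a = 0) : GaugeEquivMonomial q a := by
  set H := Subgroup.zpowers (Units.mk0 q hq)
  set S := (ordAt_support_finite ha).toFinset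
  have hS : ∀ α : ℂˣ, ordAt a α ≠ 0 → α ∈ S := fun α hα => by simpa [S] using hα
  let rep : ℂˣ → ℂˣ := fun α => (α : ℂˣ ⧸ H).out
  set g := ∏ α ∈ S, (ι (X - C (rep α : ℂ)) / ι (X - C (α : ℂ))) ^ ordAt a α
  have hg : GaugeEquivMonomial q g := GaugeEquivMonomial.prod hq S fun α _ =>
    (GaugeEquivMonomial.linear_div_linear_of_mk_eq hq (QuotientGroup.out_eq' _).symm).zpow hq _
  have hg0 := hg.ne_zero hq
  have hag : ∀ c ≠ 0, ordAt (a * g) c = 0 := fun c hc => by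
    lift c to ℂˣ using IsUnit.mk0 c hc
    rw [ordAt_mul_prod_linear_div_linear_zpow ha hS rep c]
    by_cases hc : rep c = c
    · have hclass := congrFun hdiv (c : ℂˣ ⧸ H)
      rw [divE_eq_sum hq a hS, Pi.zero_apply] at hclass
      refine (Finset.sum_congr rfl fun α _ => ?_).trans hclass
      exact if_congr ((QuotientGroup.out_mk_eq_iff H α c).trans (and_iff_left hc)) rfl rfl
    · exact Finset.sum_eq_zero fun α _ =>
        if_neg fun hα => hc ((QuotientGroup.out_mk_eq_iff H α c).mp hα).2
  obtain ⟨r, μ, hμ, hmono⟩ := exists_eq_C_mul_X_zpow_of_ordAt_eq_zero (mul_ne_zero ha hg0) hag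
  rw [← mul_inv_cancel_right₀ hg0 a, hmono]
  exact (GaugeEquivMonomial.monomial hμ r).mul hq (hg.inv hq)

theorem statement16_general (q : ℂ) (hq0 : q ≠ 0)
    (a : RatFunc ℂ) (ha : a ≠ 0) :
    divE q hq0 a = 0 ↔
      ∃ r : ℤ, ∃ μ : ℂ, μ ≠ 0 ∧ ∃ h : RatFunc ℂ, h ≠ 0 ∧
        a = RatFunc.C μ * RatFunc.X ^ r * sigmaq q h / h :=
  ⟨gaugeEquivMonomial_of_divE_eq_zero hq0 ha, divE_eq_zero_of_gaugeEquivMonomial hq0⟩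

/-- Lemme 4.9 / 4.12. The elliptic divisor of `a ∈ ℂ(z)*`
vanishes iff `a = μ·z^r·σ_q(h)/h` for some `r ∈ ℤ`, `μ ∈ ℂ*` and `h ∈ ℂ(z)*`. -/
theorem statement16 (q : ℂ) (hq0 : q ≠ 0) (hq : ‖q‖ ≠ 1)
    (a : RatFunc ℂ) (ha : a ≠ 0) :
    divE q hq0 a = 0 ↔
      ∃ r : ℤ, ∃ μ : ℂ, μ ≠ 0 ∧ ∃ h : RatFunc ℂ, h ≠ 0 ∧
        a = RatFunc.C μ * RatFunc.X ^ r * sigmaq q h / h :=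
  statement16_general q hq0 a ha
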